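/- On a sequence graph, every integer flow f with f(x) ≥ 0 for all edges x can be written as a finite sum of thread flows of sequence traversals. -/

import Mathlib

open scoped Classical
open Finset

noncomputable section

/-- A sequence graph: finite multigraph whose edges are split into segment
edges (`seg`) and bond edges, each segment edge having two distinct endpoints. -/
structure SeqGraph (V E : Type) where
  ends : E → Sym2 V
  seg : E → Prop
  seg_not_diag : ∀ x : E, seg x → ¬ (ends x).IsDiag

namespace SeqGraph

variable {V E : Type} [Fintype V] [Fintype E]

/-- Incidence multiplicity of vertex `u` on edge `x`. -/
def mult (G : SeqGraph V E) (u : V) (x : E) : ℤ :=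
  if G.ends x = s(u, u) then 2 else if u ∈ G.ends x then 1 else 0

/-- The balance condition: at each vertex the total weight of segment-edge
incidences equals the total weight of bond-edge incidences. -/
def IsFlow (G : SeqGraph V E) (f : E → ℤ) : Prop :=
  ∀ u : V,
    (∑ x : E, if G.seg x then G.mult u x * f x else 0) =
      ∑ x : E, if G.seg x then 0 else G.mult u x * f x

/-- ℓ¹ norm of an integer weighting. -/
def l1 (f : E → ℤ) : ℤ := ∑ x : E, |f x|

/-- A (nonzero) integer flow is minimal if it admits no nontrivial ℓ¹-additive
decomposition into nonzero integer flows. -/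
def MinimalFlow (G : SeqGraph V E) (f : E → ℤ) : Prop :=
  ¬ ∃ f₁ f₂ : E → ℤ, G.IsFlow f₁ ∧ G.IsFlow f₂ ∧ f₁ ≠ 0 ∧ f₂ ≠ 0 ∧
      f = f₁ + f₂ ∧ l1 f = l1 f₁ + l1 f₂

/-- A cycle traversal of length `L ≥ 1`. -/
structure CycleTraversal (G : SeqGraph V E) where
  L : ℕ
  pos : L ≠ 0
  e : ZMod L → E
  v : ZMod L → V
  compat : ∀ i : ZMod L, G.ends (e i) = s(v (i - 1), v i)

variable {G : SeqGraph V E}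

/-- Number of indices at which the traversal uses edge `x`. -/
def CycleTraversal.threadCount (t : G.CycleTraversal) (x : E) : ℕ :=
  haveI : NeZero t.L := ⟨t.pos⟩
  (Finset.univ.filter fun i : ZMod t.L => t.e i = x).card

/-- The thread flow of a traversal. -/
def CycleTraversal.threadFlow (t : G.CycleTraversal) : E → ℤ :=
  fun x => (t.threadCount x : ℤ)

/-- A sequence traversal: even length, alternating between segment edges
(at even indices) and bond edges (at odd indices). -/
def CycleTraversal.IsSeqTraversal (t : G.CycleTraversal) : Prop :=
  Even t.L ∧ ∀ i : ZMod t.L, G.seg (t.e i) ↔ Even i.val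

/-- Alternating weighting `∑ i, (-1)^i δ_{e i}` of an (even-length) traversal. -/
def CycleTraversal.altWeight (t : G.CycleTraversal) : E → ℤ :=
  haveI : NeZero t.L := ⟨t.pos⟩
  fun x => ∑ i : ZMod t.L, if t.e i = x then (-1 : ℤ) ^ i.val else 0

/-- Conjugate weighting: keep the value on segment edges, negate on bonds. -/
def conj (G : SeqGraph V E) (g : E → ℤ) : E → ℤ :=
  fun x => if G.seg x then g x else -g x

/-- Alternating flow: the conjugate of the alternating weighting. -/
def CycleTraversal.altFlow (t : G.CycleTraversal) : E → ℤ :=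
  G.conj t.altWeight

/-- Tight: equal edges only appear at indices of equal parity. -/
def CycleTraversal.Tight (t : G.CycleTraversal) : Prop :=
  ∀ i j : ZMod t.L, t.e i = t.e j → i.val % 2 = j.val % 2

/-- Synchronized: coinciding (distinct, same end vertex) indices differ by an
odd integer. -/
def CycleTraversal.Synchronized (t : G.CycleTraversal) : Prop :=
  ∀ i j : ZMod t.L, i ≠ j → t.v i = t.v j → Odd ((i.val : ℤ) - (j.val : ℤ))

/-- Nested: no interleaved pairs of coinciding indices. -/
def CycleTraversal.Nested (t : G.CycleTraversal) : Prop :=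
  ¬ ∃ i₁ i₂ j₁ j₂ : ZMod t.L,
      i₁.val < i₂.val ∧ i₂.val < j₁.val ∧ j₁.val < j₂.val ∧
      t.v i₁ = t.v j₁ ∧ t.v i₂ = t.v j₂

/-- Connectivity: any two vertices are joined by a finite walk along edges. -/
def Connected (G : SeqGraph V E) : Prop :=
  ∀ a b : V, ∃ (n : ℕ) (p : Fin (n + 1) → V), p 0 = a ∧ p (Fin.last n) = b ∧
    ∀ i : Fin n, ∃ x : E, G.ends x = s(p i.castSucc, p i.succ)

end SeqGraph

/-! A nonnegative flow `f ≠ 0` contains a sequence traversal: start on a segment edge carrying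
flow and extend greedily, alternating segment and bond edges and never using an edge more often
than `f` allows. With segment edges counted positively and bond edges negatively, the edge counts
of an alternating walk of length `k` have divergence `[v₀ = u] - (-1)ᵏ [v_k = u]` at `u`, so the
unused capacity is unbalanced at the current endpoint unless the walk has even length and is back
at its start; this forces an available edge of the required kind. The length of the walk is
bounded by `∑ f`, so it closes up. Subtracting its thread flow and inducting on `∑ f` gives the
decomposition. -/

lemma ZMod.val_sub_one_add_one_mod {k : ℕ} [NeZero k] (i : ZMod k) :
    ((i - 1).val + 1) % k = i.val := by
  rw [← ZMod.val_natCast]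
  push_cast
  rw [ZMod.natCast_zmod_val, sub_add_cancel]

lemma ZMod.neg_one_pow_val_add_one {L : ℕ} [NeZero L] (hL : Even L) (i : ZMod L) :
    (-1 : ℤ) ^ (i + 1).val = -(-1) ^ i.val := by
  have hL2 : 2 ∣ L := even_iff_two_dvd.1 hL
  have h1 : 1 % L = 1 := Nat.mod_eq_of_lt (by obtain ⟨m, hm⟩ := hL2; have := NeZero.ne L; omega)
  rw [ZMod.val_add, ZMod.val_one_eq_one_mod, h1, neg_one_pow_eq_pow_mod_two,
    Nat.mod_mod_of_dvd _ hL2, ← neg_one_pow_eq_pow_mod_two, pow_succ]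
  ring

namespace SeqGraph

variable {V E : Type} {G : SeqGraph V E}

def sign (G : SeqGraph V E) (x : E) : ℤ := if G.seg x then 1 else -1

lemma sign_eq_neg_one_pow_iff {x : E} {n : ℕ} :
    G.sign x = (-1) ^ n ↔ (G.seg x ↔ Even n) := by
  unfold sign
  rcases n.even_or_odd with hn | hn <;> by_cases hx : G.seg x <;>
    simp [hx, hn, hn.neg_one_pow, ← Nat.not_odd_iff_even]

lemma mult_nonneg (u : V) (x : E) : 0 ≤ G.mult u x := by
  unfold mult; split_ifs <;> norm_num

lemma mult_pos_iff {u : V} {x : E} : 0 < G.mult u x ↔ u ∈ G.ends x := by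
  unfold mult
  split_ifs with h₁ h₂
  · simp [h₁]
  · simp [h₂]
  · simp [h₂]

lemma mult_eq_of_ends_eq {a b : V} {x : E} (h : G.ends x = s(a, b)) (u : V) :
    G.mult u x = (if a = u then 1 else 0) + (if b = u then 1 else 0) := by
  unfold mult
  rw [h]
  by_cases ha : a = u <;> by_cases hb : b = u <;> simp [ha, hb, eq_comm]

def edgeCount {ι : Type*} (s : Finset ι) (e : ι → E) (x : E) : ℤ :=
  ∑ i ∈ s, if e i = x then 1 else 0

lemma edgeCount_range_succ (e : ℕ → E) (k : ℕ) (x : E) :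
    edgeCount (range (k + 1)) e x = edgeCount (range k) e x + if e k = x then 1 else 0 :=
  sum_range_succ _ _

lemma edgeCount_univ_zmod {k : ℕ} [NeZero k] (e : ℕ → E) :
    edgeCount (univ : Finset (ZMod k)) (fun i => e i.val) = edgeCount (range k) e := by
  ext x
  obtain ⟨n, rfl⟩ := Nat.exists_eq_succ_of_ne_zero (NeZero.ne k)
  -- `ZMod (n + 1)` is `Fin (n + 1)` by definition
  exact Fin.sum_univ_eq_sum_range (fun m => if e m = x then 1 else 0) _

lemma CycleTraversal.threadFlow_eq_edgeCount (t : G.CycleTraversal) [NeZero t.L] :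
    t.threadFlow = edgeCount univ t.e := by
  ext x
  simp only [threadFlow, threadCount, edgeCount, card_filter, Nat.cast_sum, Nat.cast_ite,
    Nat.cast_one, Nat.cast_zero]

structure AltWalk (G : SeqGraph V E) (f : E → ℤ) (k : ℕ) where
  v : ℕ → V
  e : ℕ → E
  ends_eq : ∀ i < k, G.ends (e i) = s(v i, v (i + 1))
  seg_iff : ∀ i < k, G.seg (e i) ↔ Even i
  edgeCount_le : edgeCount (range k) e ≤ f

namespace AltWalk

variable {f : E → ℤ} {k : ℕ}

lemma v_mod_of_closed (w : AltWalk G f k) (hclosed : w.v k = w.v 0) {n : ℕ} (hn : n ≤ k) :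
    w.v (n % k) = w.v n := by
  rcases hn.lt_or_eq with hn | rfl
  · rw [Nat.mod_eq_of_lt hn]
  · rw [Nat.mod_self, hclosed]

def toCycleTraversal (w : AltWalk G f k) (hk : k ≠ 0) (hclosed : w.v k = w.v 0) :
    G.CycleTraversal :=
  haveI : NeZero k := ⟨hk⟩
  { L := k
    pos := hk
    e := fun i => w.e i.val
    v := fun i => w.v (i.val + 1)
    compat := fun i => by
      rw [w.ends_eq i.val (ZMod.val_lt i), ← w.v_mod_of_closed hclosed (ZMod.val_lt (i - 1)),
        ZMod.val_sub_one_add_one_mod] }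

lemma isSeqTraversal_toCycleTraversal (w : AltWalk G f k) (hk : k ≠ 0)
    (hclosed : w.v k = w.v 0) (heven : Even k) : (w.toCycleTraversal hk hclosed).IsSeqTraversal :=
  have : NeZero (w.toCycleTraversal hk hclosed).L := ⟨hk⟩
  ⟨heven, fun i => w.seg_iff i.val (ZMod.val_lt i)⟩

lemma threadFlow_toCycleTraversal_le (w : AltWalk G f k) (hk : k ≠ 0)
    (hclosed : w.v k = w.v 0) : (w.toCycleTraversal hk hclosed).threadFlow ≤ f := by
  have : NeZero (w.toCycleTraversal hk hclosed).L := ⟨hk⟩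
  rw [CycleTraversal.threadFlow_eq_edgeCount]
  exact (edgeCount_univ_zmod w.e).le.trans w.edgeCount_le

end AltWalk

variable [Fintype E]

lemma sum_mul_edgeCount {ι : Type*} (s : Finset ι) (e : ι → E) (g : E → ℤ) :
    ∑ x, g x * edgeCount s e x = ∑ i ∈ s, g (e i) := by
  simp only [edgeCount, mul_sum, mul_ite, mul_one, mul_zero]
  rw [sum_comm]
  simp

lemma sum_edgeCount {ι : Type*} (s : Finset ι) (e : ι → E) :
    ∑ x, edgeCount s e x = #s := by
  simpa using sum_mul_edgeCount s e 1

def divergence (G : SeqGraph V E) (f : E → ℤ) (u : V) : ℤ :=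
  ∑ x, G.sign x * G.mult u x * f x

lemma isFlow_iff_divergence_eq_zero {f : E → ℤ} :
    G.IsFlow f ↔ ∀ u, G.divergence f u = 0 := by
  have h : ∀ u, G.divergence f u = (∑ x : E, if G.seg x then G.mult u x * f x else 0) -
      ∑ x : E, if G.seg x then 0 else G.mult u x * f x := fun u => by
    rw [divergence, ← sum_sub_distrib]
    refine sum_congr rfl fun x _ => ?_
    unfold sign; split_ifs <;> ring
  simp only [IsFlow, h, sub_eq_zero]

lemma divergence_sub (f g : E → ℤ) :
    G.divergence (f - g) = G.divergence f - G.divergence g := by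
  ext u
  simp only [divergence, Pi.sub_apply, mul_sub, sum_sub_distrib]

lemma IsFlow.sub {f g : E → ℤ} (hf : G.IsFlow f) (hg : G.IsFlow g) : G.IsFlow (f - g) := by
  rw [isFlow_iff_divergence_eq_zero] at *
  simp [divergence_sub, hf, hg]

lemma divergence_edgeCount {ι : Type*} (s : Finset ι) (e : ι → E) (u : V) :
    G.divergence (edgeCount s e) u = ∑ i ∈ s, G.sign (e i) * G.mult u (e i) :=
  sum_mul_edgeCount s e _

lemma exists_sign_eq_of_neg_one_pow_mul_divergence_pos {g : E → ℤ} (hg : 0 ≤ g) {u : V}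
    {n : ℕ} (h : 0 < (-1) ^ n * G.divergence g u) :
    ∃ x, G.sign x = (-1) ^ n ∧ u ∈ G.ends x ∧ 0 < g x := by
  rw [divergence, mul_sum] at h
  obtain ⟨x, -, hx⟩ := exists_lt_of_sum_lt (f := fun _ => (0 : ℤ)) (by simpa using h)
  have hm := G.mult_nonneg u x
  have hsign : G.sign x = 1 ∨ G.sign x = -1 := by unfold sign; split_ifs <;> simp
  obtain ⟨hsx, hmg⟩ : G.sign x = (-1) ^ n ∧ 0 < G.mult u x * g x := by
    rcases hsign with hs | hs <;> rcases neg_one_pow_eq_or ℤ n with hp | hp <;>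
      rw [hs, hp] at hx ⊢ <;> constructor <;> nlinarith [mul_nonneg hm (hg x)]
  obtain ⟨hmu, hgx⟩ := (pos_and_pos_or_neg_and_neg_of_mul_pos hmg).resolve_right
    fun h => hm.not_gt h.1
  exact ⟨x, hsx, mult_pos_iff.1 hmu, hgx⟩

lemma exists_seg_of_isFlow {f : E → ℤ} (hf : G.IsFlow f) (hpos : 0 ≤ f) (hne : f ≠ 0) :
    ∃ x, G.seg x ∧ 0 < f x := by
  obtain ⟨x₀, hx₀⟩ : ∃ x, 0 < f x := by
    by_contra! h
    exact hne (le_antisymm h hpos)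
  by_cases hs : G.seg x₀
  · exact ⟨x₀, hs, hx₀⟩
  by_contra! h
  obtain ⟨a, ha⟩ : ∃ a, a ∈ G.ends x₀ := (G.ends x₀).ind fun a _ => ⟨a, Sym2.mem_mk_left _ _⟩
  have : G.divergence f a < 0 := by
    refine sum_neg' (fun x _ => ?_) ⟨x₀, mem_univ _, ?_⟩
    · unfold sign
      split_ifs with hx
      · simp [le_antisymm (h x hx) (hpos x)]
      · nlinarith [mul_nonneg (G.mult_nonneg a x) (hpos x)]
    · simp only [sign, if_neg hs]
      nlinarith [mult_pos_iff.2 ha]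
  exact this.ne (isFlow_iff_divergence_eq_zero.1 hf a)

namespace CycleTraversal

lemma sum_threadFlow (t : G.CycleTraversal) : ∑ x, t.threadFlow x = t.L := by
  have : NeZero t.L := ⟨t.pos⟩
  rw [threadFlow_eq_edgeCount, sum_edgeCount, card_univ, ZMod.card]

lemma IsSeqTraversal.isFlow_threadFlow {t : G.CycleTraversal} (ht : t.IsSeqTraversal) :
    G.IsFlow t.threadFlow := by
  have : NeZero t.L := ⟨t.pos⟩
  rw [isFlow_iff_divergence_eq_zero, threadFlow_eq_edgeCount]
  intro u
  set c : ZMod t.L → ℤ := fun i => if t.v i = u then 1 else 0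
  have hshift : ∑ i, (-1) ^ i.val * c (i - 1) = -∑ i, (-1) ^ i.val * c i := by
    rw [← Equiv.sum_comp (Equiv.addRight (1 : ZMod t.L))]
    simp [ZMod.neg_one_pow_val_add_one ht.1, sum_neg_distrib]
  calc G.divergence (edgeCount univ t.e) u = ∑ i, (-1) ^ i.val * (c (i - 1) + c i) := by
        rw [divergence_edgeCount]
        refine sum_congr rfl fun i _ => ?_
        rw [sign_eq_neg_one_pow_iff.2 (ht.2 i), mult_eq_of_ends_eq (t.compat i)]
    _ = 0 := by
      rw [sum_congr rfl fun i _ => mul_add _ _ _, sum_add_distrib, hshift, neg_add_cancel]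

end CycleTraversal

namespace AltWalk

variable {f : E → ℤ} {k : ℕ}

lemma length_le (w : AltWalk G f k) : (k : ℤ) ≤ ∑ x, f x :=
  calc (k : ℤ) = ∑ x, edgeCount (range k) w.e x := by rw [sum_edgeCount, card_range]
    _ ≤ ∑ x, f x := sum_le_sum fun x _ => w.edgeCount_le x

lemma divergence_edgeCount (w : AltWalk G f k) (u : V) :
    G.divergence (edgeCount (range k) w.e) u =
      (if w.v 0 = u then 1 else 0) - (-1) ^ k * (if w.v k = u then 1 else 0) := by
  set c : ℕ → ℤ := fun i => (-1) ^ i * if w.v i = u then 1 else 0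
  have hstep : ∀ i ∈ range k, G.sign (w.e i) * G.mult u (w.e i) = c i - c (i + 1) := by
    intro i hi
    rw [mem_range] at hi
    rw [sign_eq_neg_one_pow_iff.2 (w.seg_iff i hi), mult_eq_of_ends_eq (w.ends_eq i hi)]
    simp only [c, pow_succ]
    ring
  rw [SeqGraph.divergence_edgeCount, sum_congr rfl hstep, sum_range_sub']
  simp [c]

lemma exists_next_edge (hf : G.IsFlow f) (w : AltWalk G f k)
    (hopen : ¬(Even k ∧ w.v k = w.v 0)) :
    ∃ x, (G.seg x ↔ Even k) ∧ w.v k ∈ G.ends x ∧ edgeCount (range k) w.e x < f x := by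
  have hdiv : G.divergence (f - edgeCount (range k) w.e) (w.v k) =
      (-1) ^ k - if w.v 0 = w.v k then 1 else 0 := by
    rw [divergence_sub, Pi.sub_apply, isFlow_iff_divergence_eq_zero.1 hf, w.divergence_edgeCount]
    simp
  have hpos : 0 < (-1) ^ k * G.divergence (f - edgeCount (range k) w.e) (w.v k) := by
    rw [hdiv]
    rcases k.even_or_odd with he | ho
    · rw [he.neg_one_pow, if_neg fun h => hopen ⟨he, h.symm⟩]
      norm_num
    · rw [ho.neg_one_pow]
      split_ifs <;> norm_num
  obtain ⟨x, hx, hmem, hlt⟩ :=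
    exists_sign_eq_of_neg_one_pow_mul_divergence_pos (sub_nonneg.2 w.edgeCount_le) hpos
  exact ⟨x, sign_eq_neg_one_pow_iff.1 hx, hmem, sub_pos.1 hlt⟩

lemma exists_succ (hf : G.IsFlow f) (w : AltWalk G f k) (hopen : ¬(Even k ∧ w.v k = w.v 0)) :
    Nonempty (AltWalk G f (k + 1)) := by
  obtain ⟨x, hseg, hmem, hlt⟩ := w.exists_next_edge hf hopen
  obtain ⟨b, hb⟩ := Sym2.mem_iff_exists.1 hmem
  refine ⟨⟨Function.update w.v (k + 1) b, Function.update w.e k x,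
    fun i hi => ?_, fun i hi => ?_, fun y => ?_⟩⟩
  · rcases Nat.lt_succ_iff_lt_or_eq.1 hi with hi | rfl
    · rw [Function.update_of_ne hi.ne, Function.update_of_ne (by omega : i ≠ k + 1),
        Function.update_of_ne (by omega : i + 1 ≠ k + 1), w.ends_eq i hi]
    · simp [hb]
  · rcases Nat.lt_succ_iff_lt_or_eq.1 hi with hi | rfl
    · rw [Function.update_of_ne hi.ne, w.seg_iff i hi]
    · simp [hseg]
  · have hprefix : edgeCount (range k) (Function.update w.e k x) = edgeCount (range k) w.e := by
      ext y
      exact sum_congr rfl fun i hi => by rw [Function.update_of_ne (mem_range.1 hi).ne]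
    rw [edgeCount_range_succ, hprefix, Function.update_self]
    split_ifs with hxy
    · exact hxy ▸ hlt
    · simpa using w.edgeCount_le y

end AltWalk

variable {f : E → ℤ}

lemma exists_altWalk_one (hf : G.IsFlow f) (hpos : 0 ≤ f) (hne : f ≠ 0) :
    Nonempty (AltWalk G f 1) := by
  obtain ⟨x, hs, hx⟩ := exists_seg_of_isFlow hf hpos hne
  obtain ⟨a, b, hab⟩ : ∃ a b, G.ends x = s(a, b) := (G.ends x).ind fun a b => ⟨a, b, rfl⟩
  refine ⟨⟨fun i => if i = 0 then a else b, fun _ => x, fun i hi => ?_, fun i hi => ?_,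
    fun y => ?_⟩⟩
  · obtain rfl : i = 0 := by omega
    simpa using hab
  · obtain rfl : i = 0 := by omega
    simpa using hs
  · simp only [edgeCount, sum_range_one]
    split_ifs with h
    · exact h ▸ hx
    · exact hpos y

lemma exists_closed_altWalk (hf : G.IsFlow f) (w₁ : AltWalk G f 1) :
    ∃ k, k ≠ 0 ∧ Even k ∧ ∃ w : AltWalk G f k, w.v k = w.v 0 := by
  by_contra! hopen
  have hwalk : ∀ k, 1 ≤ k → Nonempty (AltWalk G f k) := by
    intro k hk
    induction k, hk using Nat.le_induction with
    | base => exact ⟨w₁⟩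
    | succ k hk ih =>
      obtain ⟨w⟩ := ih
      exact w.exists_succ hf fun h => hopen k (by omega) h.1 w h.2
  obtain ⟨w⟩ := hwalk ((∑ x, f x).toNat + 1) (by omega)
  have := w.length_le
  omega

lemma exists_isSeqTraversal_threadFlow_le (hf : G.IsFlow f) (hpos : 0 ≤ f) (hne : f ≠ 0) :
    ∃ t : G.CycleTraversal, t.IsSeqTraversal ∧ t.threadFlow ≤ f := by
  obtain ⟨w₁⟩ := exists_altWalk_one hf hpos hne
  obtain ⟨k, hk, heven, w, hclosed⟩ := exists_closed_altWalk hf w₁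
  exact ⟨w.toCycleTraversal hk hclosed, w.isSeqTraversal_toCycleTraversal hk hclosed heven,
    w.threadFlow_toCycleTraversal_le hk hclosed⟩

end SeqGraph

theorem stmt_5_general (V E : Type) [Fintype E] (G : SeqGraph V E)
    (f : E → ℤ) (hf : G.IsFlow f) (hpos : ∀ x : E, 0 ≤ f x) :
    ∃ (n : ℕ) (T : Fin n → G.CycleTraversal),
      (∀ k : Fin n, (T k).IsSeqTraversal) ∧
      f = ∑ k : Fin n, (T k).threadFlow := by
  induction hN : (∑ x, f x).toNat using Nat.strong_induction_on generalizing f with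
  | _ N ih =>
    by_cases hf0 : f = 0
    · exact ⟨0, Fin.elim0, fun k => k.elim0, by simp [hf0]⟩
    obtain ⟨t, ht, hle⟩ := SeqGraph.exists_isSeqTraversal_threadFlow_le hf hpos hf0
    have hsum : ∑ x, (f - t.threadFlow) x = ∑ x, f x - t.L := by
      rw [← t.sum_threadFlow, ← sum_sub_distrib, Pi.sub_def]
    have hL : t.L ≠ 0 := t.pos
    have hrest : 0 ≤ ∑ x, (f - t.threadFlow) x := sum_nonneg fun x _ => sub_nonneg.2 (hle x)
    obtain ⟨n, T, hT, hf'⟩ := ih _ (by omega) (f - t.threadFlow) (hf.sub ht.isFlow_threadFlow)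
      (fun x => sub_nonneg.2 (hle x)) rfl
    refine ⟨n + 1, Fin.cons t T, Fin.cases ht hT, ?_⟩
    rw [Fin.sum_univ_succ, Fin.cons_zero]
    simp only [Fin.cons_succ, ← hf', add_sub_cancel]

/-- Every nonnegative integer flow is a finite sum of thread flows of
sequence traversals. -/
theorem stmt_5 (V E : Type) [Fintype V] [Fintype E] (G : SeqGraph V E)
    (f : E → ℤ) (hf : G.IsFlow f) (hpos : ∀ x : E, 0 ≤ f x) :
    ∃ (n : ℕ) (T : Fin n → G.CycleTraversal),
      (∀ k : Fin n, (T k).IsSeqTraversal) ∧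
      f = ∑ k : Fin n, (T k).threadFlow :=
  stmt_5_general V E G f hf hpos
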